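/- Let Γ be a finitely generated group, B a Banach space, and suppose for every r ∈ ℕ* there is an r-locally isometric affine action α_r(g)· = σ_r(g)· + b_r(g) of Γ on a Banach space B_r together with non-decreasing functions ρ₁, ρ₂ → ∞ (independent of r) such that ρ₁(d(e,g)) ≤ ‖b_r(g)‖ ≤ ρ₂(d(e,g)) whenever d(e,g) < r. Then Γ admits a proper isometric affine action on the ultraproduct B_𝒰 of (B_r) with respect to any non-principal ultrafilter 𝒰 on ℕ*: the cocycle b(g) = [(b_r(g))] satisfies ρ₁(d(e,g)) ≤ ‖b(g)‖_{B_𝒰} for all g ∈ Γ. -/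

import Mathlib

/-!
Once `r > d(e, g)`, `σ_r(g)` is a linear isometry and the multiplicativity and cocycle
identities hold at `g`, `h`, `gh`; since `𝒰` is non-principal, this is the case for
`𝒰`-almost every `r`, and the ultraproduct only sees `𝒰`-almost every `r`. So the
coordinatewise action descends to an honest isometric affine action on `B_𝒰`. The norm of
`[(b_r(g))]` is the `𝒰`-limit of `‖b_r(g)‖ ≥ ρ₁(d(e, g))`, and properness follows because
balls of a word metric are finite.
-/

open Filter

/-- `dist` on `Γ` is the word metric associated with the finite generating set `S`. -/
def IsWordMetric {Γ : Type*} [Group Γ] [MetricSpace Γ] (S : Set Γ) : Prop :=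
  S.Finite ∧ Subgroup.closure S = ⊤ ∧
    ∀ g h : Γ, dist g h = sInf {t : ℝ | ∃ w : List Γ,
      (w.length : ℝ) = t ∧ (∀ x ∈ w, x ∈ S ∨ x⁻¹ ∈ S) ∧ g⁻¹ * h = w.prod}

/-- An `r`-locally isometric affine action of `Γ` on `B`. -/
structure RLocalIsomAffAction (Γ : Type*) [Group Γ] [MetricSpace Γ] (r : ℝ)
    (B : Type*) [NormedAddCommGroup B] [NormedSpace ℝ B] where
  π : Γ → B → B
  b : Γ → B
  isom : ∀ g : Γ, dist (1 : Γ) g < r → Isometry (π g)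
  bij : ∀ g : Γ, dist (1 : Γ) g < r → Function.Bijective (π g)
  map_add : ∀ g : Γ, dist (1 : Γ) g < r → ∀ u v : B, π g (u + v) = π g u + π g v
  map_smul : ∀ g : Γ, dist (1 : Γ) g < r → ∀ (c : ℝ) (v : B), π g (c • v) = c • π g v
  mul : ∀ g h : Γ, dist (1 : Γ) g < r → dist (1 : Γ) h < r → dist (1 : Γ) (g * h) < r →
    ∀ v : B, π (g * h) v = π g (π h v)
  cocycle : ∀ g h : Γ, dist (1 : Γ) g < r → dist (1 : Γ) h < r →
    dist (1 : Γ) (g * h) < r → b (g * h) = π g (b h) + b g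

/-- The submodule of bounded sequences `(a_r)` with `a_r ∈ B_r`. -/
def boundedSeqs (B : ℕ → Type*) [∀ r, NormedAddCommGroup (B r)]
    [∀ r, NormedSpace ℝ (B r)] : Submodule ℝ (∀ r, B r) where
  carrier := {a | ∃ K : ℝ, ∀ r, ‖a r‖ ≤ K}
  add_mem' := by
    rintro a b ⟨K, hK⟩ ⟨L, hL⟩
    exact ⟨K + L, fun r => (norm_add_le _ _).trans (add_le_add (hK r) (hL r))⟩
  zero_mem' := ⟨0, fun r => by simp⟩
  smul_mem' := by
    rintro c a ⟨K, hK⟩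
    refine ⟨‖c‖ * K, fun r => ?_⟩
    rw [Pi.smul_apply, norm_smul]
    exact mul_le_mul_of_nonneg_left (hK r) (norm_nonneg c)

/-- `q : ℓ^∞(ℕ, (B_r)) → V` realizes `V` as the ultraproduct of `(B_r)` along `𝒰`. -/
def IsUltraproductQuotient (B : ℕ → Type*) [∀ r, NormedAddCommGroup (B r)]
    [∀ r, NormedSpace ℝ (B r)] (𝒰 : Ultrafilter ℕ)
    (V : Type*) [NormedAddCommGroup V] [NormedSpace ℝ V]
    (q : boundedSeqs B →ₗ[ℝ] V) : Prop :=
  Function.Surjective q ∧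
    ∀ a : boundedSeqs B, Tendsto (fun r => ‖a.1 r‖) (𝒰 : Filter ℕ) (nhds ‖q a‖)

theorem List.finite_setOf_prod_of_length_le {G : Type*} [Monoid G] {T : Set G} (hT : T.Finite)
    (n : ℕ) : {g : G | ∃ w : List G, w.length ≤ n ∧ (∀ x ∈ w, x ∈ T) ∧ g = w.prod}.Finite := by
  have : Finite T := hT.to_subtype
  refine ((List.finite_length_le T n).image fun l => (l.map Subtype.val).prod).subset ?_
  rintro g ⟨w, hlen, hw, rfl⟩
  lift w to List T using hw
  exact ⟨w, by simpa using hlen, rfl⟩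

namespace IsWordMetric

variable {Γ : Type*} [Group Γ] [MetricSpace Γ] {S : Set Γ}

theorem finite_setOf_dist_one_lt (hS : IsWordMetric S) (R : ℝ) :
    {g : Γ | dist 1 g < R}.Finite := by
  obtain ⟨hfin, hgen, hdist⟩ := hS
  refine (List.finite_setOf_prod_of_length_le (T := {x | x ∈ S ∨ x⁻¹ ∈ S})
    (hfin.union (hfin.preimage inv_injective.injOn)) ⌈R⌉₊).subset fun g (hg : dist 1 g < R) => ?_
  have hg_mem : g ∈ Submonoid.closure (S ∪ S⁻¹) := by
    rw [← Subgroup.closure_toSubmonoid, hgen]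
    trivial
  have hne : {t : ℝ | ∃ w : List Γ, (w.length : ℝ) = t ∧ (∀ x ∈ w, x ∈ S ∨ x⁻¹ ∈ S) ∧
      1⁻¹ * g = w.prod}.Nonempty := by
    obtain ⟨l, hl, rfl⟩ := Submonoid.exists_list_of_mem_closure hg_mem
    exact ⟨_, l, rfl, fun x hx => hl x hx, by simp⟩
  rw [hdist] at hg
  obtain ⟨_, ⟨w, rfl, hw, hprod⟩, hlt⟩ := exists_lt_of_csInf_lt hne hg
  exact ⟨w, by exact_mod_cast (hlt.trans_le (Nat.le_ceil R)).le, hw, by simpa using hprod⟩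

theorem tendsto_dist_one_cofinite (hS : IsWordMetric S) :
    Tendsto (dist (1 : Γ)) cofinite atTop :=
  tendsto_atTop.2 fun R => by
    simpa only [eventually_cofinite, not_le] using hS.finite_setOf_dist_one_lt R

end IsWordMetric

namespace boundedSeqs

variable {B C : ℕ → Type*} [∀ r, NormedAddCommGroup (B r)] [∀ r, NormedSpace ℝ (B r)]
  [∀ r, NormedAddCommGroup (C r)] [∀ r, NormedSpace ℝ (C r)]

def map (T : ∀ r, B r →ₗᵢ[ℝ] C r) : boundedSeqs B →ₗ[ℝ] boundedSeqs C where
  toFun a := ⟨fun r => T r (a.1 r), by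
    obtain ⟨K, hK⟩ := a.2
    exact ⟨K, fun r => (T r).norm_map (a.1 r) ▸ hK r⟩⟩
  map_add' a a' := by ext r; simp
  map_smul' c a := by ext r; simp

@[simp]
theorem map_apply (T : ∀ r, B r →ₗᵢ[ℝ] C r) (a : boundedSeqs B) (r : ℕ) :
    (map T a).1 r = T r (a.1 r) :=
  rfl

end boundedSeqs

namespace IsUltraproductQuotient

variable {B C : ℕ → Type*} [∀ r, NormedAddCommGroup (B r)] [∀ r, NormedSpace ℝ (B r)]
  [∀ r, NormedAddCommGroup (C r)] [∀ r, NormedSpace ℝ (C r)] {𝒰 : Ultrafilter ℕ}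
  {V W : Type*} [NormedAddCommGroup V] [NormedSpace ℝ V] [NormedAddCommGroup W]
  [NormedSpace ℝ W] {q : boundedSeqs B →ₗ[ℝ] V} {p : boundedSeqs C →ₗ[ℝ] W}

theorem norm_eq_of_eventually (hq : IsUltraproductQuotient B 𝒰 V q)
    (hp : IsUltraproductQuotient C 𝒰 W p) {a : boundedSeqs B} {c : boundedSeqs C}
    (h : ∀ᶠ r in (𝒰 : Filter ℕ), ‖a.1 r‖ = ‖c.1 r‖) : ‖q a‖ = ‖p c‖ :=
  tendsto_nhds_unique ((hq.2 a).congr' h) (hp.2 c)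

theorem le_norm_of_eventually (hq : IsUltraproductQuotient B 𝒰 V q) {t : ℝ}
    {a : boundedSeqs B} (h : ∀ᶠ r in (𝒰 : Filter ℕ), t ≤ ‖a.1 r‖) : t ≤ ‖q a‖ :=
  ge_of_tendsto (hq.2 a) h

theorem eq_of_eventuallyEq (hq : IsUltraproductQuotient B 𝒰 V q) {a a' : boundedSeqs B}
    (h : ∀ᶠ r in (𝒰 : Filter ℕ), a.1 r = a'.1 r) : q a = q a' := by
  have hlim : Tendsto (fun r => ‖(a - a').1 r‖) (𝒰 : Filter ℕ) (nhds 0) :=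
    tendsto_const_nhds.congr' <| h.mono fun r hr => by simp [hr]
  rw [← sub_eq_zero, ← map_sub, ← norm_eq_zero]
  exact tendsto_nhds_unique (hq.2 _) hlim

theorem ker_le_ker_map (hq : IsUltraproductQuotient B 𝒰 V q)
    (hp : IsUltraproductQuotient C 𝒰 W p) (T : ∀ r, B r →ₗᵢ[ℝ] C r) :
    LinearMap.ker q ≤ LinearMap.ker (p ∘ₗ boundedSeqs.map T) := fun a ha => by
  rw [LinearMap.mem_ker] at ha ⊢
  rw [← norm_eq_zero, LinearMap.comp_apply,
    hp.norm_eq_of_eventually hq (c := a) (.of_forall fun r => by simp), ha, norm_zero]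

noncomputable def ultraMap (hq : IsUltraproductQuotient B 𝒰 V q)
    (hp : IsUltraproductQuotient C 𝒰 W p) (T : ∀ r, B r →ₗᵢ[ℝ] C r) : V →ₗᵢ[ℝ] W where
  toLinearMap := (LinearMap.ker q).liftQ _ (hq.ker_le_ker_map hp T) ∘ₗ
    (q.quotKerEquivOfSurjective hq.1).symm.toLinearMap
  norm_map' v := by
    obtain ⟨a, rfl⟩ := hq.1 v
    simpa using hp.norm_eq_of_eventually hq (.of_forall fun r => by simp)

theorem ultraMap_apply (hq : IsUltraproductQuotient B 𝒰 V q)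
    (hp : IsUltraproductQuotient C 𝒰 W p) (T : ∀ r, B r →ₗᵢ[ℝ] C r) (a : boundedSeqs B) :
    hq.ultraMap hp T (q a) = p (boundedSeqs.map T a) := by
  simp [ultraMap]

end IsUltraproductQuotient

namespace RLocalIsomAffAction

variable {Γ : Type*} [Group Γ] [MetricSpace Γ] {r : ℝ} {B : Type*} [NormedAddCommGroup B]
  [NormedSpace ℝ B] (A : RLocalIsomAffAction Γ r B)

def toLinearIsometry {g : Γ} (hg : dist 1 g < r) : B →ₗᵢ[ℝ] B where
  toFun := A.π g
  map_add' := A.map_add g hg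
  map_smul' := A.map_smul g hg
  norm_map' v := by
    have h0 : A.π g 0 = 0 := by simpa using A.map_smul g hg 0 0
    simpa [h0] using (A.isom g hg).dist_eq v 0

/-- Outside the ball of radius `r` the identity is only a placeholder: ultralimits see
`linearPart g` only for `r > d(e, g)`. -/
noncomputable def linearPart (g : Γ) : B →ₗᵢ[ℝ] B :=
  if hg : dist 1 g < r then A.toLinearIsometry hg else .id

theorem linearPart_apply {g : Γ} (hg : dist 1 g < r) (v : B) : A.linearPart g v = A.π g v := by
  simp [linearPart, hg, toLinearIsometry]

theorem π_one (hr : 0 < r) (v : B) : A.π 1 v = v := by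
  have h1 : dist (1 : Γ) 1 < r := by simpa using hr
  exact (A.bij 1 h1).1 (by simpa using (A.mul 1 1 h1 h1 (by simpa using h1) v).symm)

end RLocalIsomAffAction

theorem eventually_lt_natCast_of_le_cofinite {l : Filter ℕ} (hl : l ≤ cofinite) (x : ℝ) :
    ∀ᶠ r : ℕ in l, x < r :=
  hl (Nat.cofinite_eq_atTop ▸ tendsto_natCast_atTop_atTop.eventually_gt_atTop x)

namespace IsUltraproductQuotient

variable {Γ : Type*} [Group Γ] [MetricSpace Γ] {B : ℕ → Type*} [∀ r, NormedAddCommGroup (B r)]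
  [∀ r, NormedSpace ℝ (B r)] {𝒰 : Ultrafilter ℕ} {V : Type*} [NormedAddCommGroup V]
  [NormedSpace ℝ V] {q : boundedSeqs B →ₗ[ℝ] V} (hq : IsUltraproductQuotient B 𝒰 V q)
  (A : ∀ r : ℕ, RLocalIsomAffAction Γ r (B r))

noncomputable def linearAction (g : Γ) : V →ₗᵢ[ℝ] V :=
  hq.ultraMap hq fun r => (A r).linearPart g

variable {hq A}

theorem linearAction_apply (g : Γ) (a : boundedSeqs B) :
    hq.linearAction A g (q a) = q (boundedSeqs.map (fun r => (A r).linearPart g) a) :=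
  hq.ultraMap_apply hq _ a

theorem linearAction_mul (h𝒰 : (𝒰 : Filter ℕ) ≤ cofinite) (g h : Γ) (v : V) :
    hq.linearAction A (g * h) v = hq.linearAction A g (hq.linearAction A h v) := by
  obtain ⟨a, rfl⟩ := hq.1 v
  simp only [linearAction_apply]
  refine hq.eq_of_eventuallyEq ?_
  filter_upwards [eventually_lt_natCast_of_le_cofinite h𝒰 (dist 1 g),
    eventually_lt_natCast_of_le_cofinite h𝒰 (dist 1 h),
    eventually_lt_natCast_of_le_cofinite h𝒰 (dist 1 (g * h))] with r hg hh hgh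
  simp [RLocalIsomAffAction.linearPart_apply, hg, hh, hgh, (A r).mul g h hg hh hgh]

theorem linearAction_one (h𝒰 : (𝒰 : Filter ℕ) ≤ cofinite) (v : V) :
    hq.linearAction A 1 v = v := by
  obtain ⟨a, rfl⟩ := hq.1 v
  rw [linearAction_apply]
  refine hq.eq_of_eventuallyEq ?_
  filter_upwards [eventually_lt_natCast_of_le_cofinite h𝒰 0] with r hr
  have h1 : dist (1 : Γ) 1 < r := by simpa using hr
  simp [RLocalIsomAffAction.linearPart_apply _ h1, (A r).π_one hr]

theorem bijective_linearAction (h𝒰 : (𝒰 : Filter ℕ) ≤ cofinite) (g : Γ) :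
    Function.Bijective (hq.linearAction A g) :=
  Function.bijective_iff_has_inverse.2 ⟨hq.linearAction A g⁻¹,
    fun v => by rw [← linearAction_mul h𝒰, inv_mul_cancel, linearAction_one h𝒰],
    fun v => by rw [← linearAction_mul h𝒰, mul_inv_cancel, linearAction_one h𝒰]⟩

theorem linearAction_cocycle (h𝒰 : (𝒰 : Filter ℕ) ≤ cofinite) {b : Γ → boundedSeqs B}
    (hb : ∀ g r, (b g).1 r = (A r).b g) (g h : Γ) :
    q (b (g * h)) = hq.linearAction A g (q (b h)) + q (b g) := by
  rw [linearAction_apply, ← map_add]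
  refine hq.eq_of_eventuallyEq ?_
  filter_upwards [eventually_lt_natCast_of_le_cofinite h𝒰 (dist 1 g),
    eventually_lt_natCast_of_le_cofinite h𝒰 (dist 1 h),
    eventually_lt_natCast_of_le_cofinite h𝒰 (dist 1 (g * h))] with r hg hh hgh
  simp [hb, RLocalIsomAffAction.linearPart_apply _ hg, (A r).cocycle g h hg hh hgh]

end IsUltraproductQuotient

theorem stmt16_general {Γ : Type*} [Group Γ] [MetricSpace Γ] (S : Set Γ) (hS : IsWordMetric S)
    (B : ℕ → Type*) [∀ r, NormedAddCommGroup (B r)] [∀ r, NormedSpace ℝ (B r)]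
    (A : ∀ r : ℕ, RLocalIsomAffAction Γ (r : ℝ) (B r))
    (ρ₁ ρ₂ : ℝ → ℝ)
    (htend₁ : Tendsto ρ₁ atTop atTop)
    (hbounds : ∀ (g : Γ) (r : ℕ), dist (1 : Γ) g < (r : ℝ) →
      ρ₁ (dist (1 : Γ) g) ≤ ‖(A r).b g‖ ∧ ‖(A r).b g‖ ≤ ρ₂ (dist (1 : Γ) g))
    (hzero : ∀ (g : Γ) (r : ℕ), ¬ dist (1 : Γ) g < (r : ℝ) → (A r).b g = 0)
    (𝒰 : Ultrafilter ℕ) (h𝒰 : (𝒰 : Filter ℕ) ≤ cofinite)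
    (V : Type*) [NormedAddCommGroup V] [NormedSpace ℝ V] (q : boundedSeqs B →ₗ[ℝ] V)
    (hq : IsUltraproductQuotient B 𝒰 V q) :
    ∃ (π : Γ → V → V) (b : Γ → V),
      (∀ g, Isometry (π g)) ∧
      (∀ g, Function.Bijective (π g)) ∧
      (∀ g, ∀ u v : V, π g (u + v) = π g u + π g v) ∧
      (∀ g, ∀ (c : ℝ) (v : V), π g (c • v) = c • π g v) ∧
      (∀ g h, ∀ v : V, π (g * h) v = π g (π h v)) ∧
      (∀ g h, b (g * h) = π g (b h) + b g) ∧
      (∀ g : Γ, ∃ b' : boundedSeqs B,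
        (∀ r : ℕ, b'.1 r = (A r).b g) ∧ b g = q b') ∧
      (∀ g : Γ, ρ₁ (dist (1 : Γ) g) ≤ ‖b g‖) ∧
      Tendsto (fun g : Γ => ‖b g‖) cofinite atTop := by
  have hbs (g : Γ) : (fun r => (A r).b g) ∈ boundedSeqs B := by
    refine ⟨max (ρ₂ (dist 1 g)) 0, fun r => ?_⟩
    by_cases h : dist (1 : Γ) g < r
    · exact le_max_of_le_left (hbounds g r h).2
    · simp [hzero g r h]
  let bs (g : Γ) : boundedSeqs B := ⟨_, hbs g⟩
  have hlower (g : Γ) : ρ₁ (dist 1 g) ≤ ‖q (bs g)‖ :=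
    hq.le_norm_of_eventually <| (eventually_lt_natCast_of_le_cofinite h𝒰 _).mono
      fun r hr => (hbounds g r hr).1
  refine ⟨fun g => hq.linearAction A g, fun g => q (bs g), fun g => (hq.linearAction A g).isometry,
    IsUltraproductQuotient.bijective_linearAction h𝒰, fun g => map_add _, fun g => map_smul _,
    IsUltraproductQuotient.linearAction_mul h𝒰,
    IsUltraproductQuotient.linearAction_cocycle h𝒰 fun _ _ => rfl,
    fun g => ⟨bs g, fun _ => rfl, rfl⟩, hlower, ?_⟩
  exact tendsto_atTop_mono hlower (htend₁.comp hS.tendsto_dist_one_cofinite)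

/-- From a family of `r`-locally isometric affine actions whose cocycles satisfy uniform
coarse bounds `ρ₁(d(e,g)) ≤ ‖b_r(g)‖ ≤ ρ₂(d(e,g))` for `d(e,g) < r` (and vanish
otherwise), one obtains a proper isometric affine action of `Γ` on the ultraproduct,
whose cocycle `b(g) = [(b_r(g))]` satisfies `ρ₁(d(e,g)) ≤ ‖b(g)‖`. -/
theorem stmt16 {Γ : Type*} [Group Γ] [MetricSpace Γ] (S : Set Γ) (hS : IsWordMetric S)
    (B : ℕ → Type*) [∀ r, NormedAddCommGroup (B r)] [∀ r, NormedSpace ℝ (B r)]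
    (A : ∀ r : ℕ, RLocalIsomAffAction Γ (r : ℝ) (B r))
    (ρ₁ ρ₂ : ℝ → ℝ) (hmono₁ : Monotone ρ₁) (hmono₂ : Monotone ρ₂)
    (htend₁ : Tendsto ρ₁ atTop atTop) (htend₂ : Tendsto ρ₂ atTop atTop)
    (hbounds : ∀ (g : Γ) (r : ℕ), dist (1 : Γ) g < (r : ℝ) →
      ρ₁ (dist (1 : Γ) g) ≤ ‖(A r).b g‖ ∧ ‖(A r).b g‖ ≤ ρ₂ (dist (1 : Γ) g))
    (hzero : ∀ (g : Γ) (r : ℕ), ¬ dist (1 : Γ) g < (r : ℝ) → (A r).b g = 0)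
    (𝒰 : Ultrafilter ℕ) (h𝒰 : (𝒰 : Filter ℕ) ≤ cofinite)
    (V : Type*) [NormedAddCommGroup V] [NormedSpace ℝ V] (q : boundedSeqs B →ₗ[ℝ] V)
    (hq : IsUltraproductQuotient B 𝒰 V q) :
    ∃ (π : Γ → V → V) (b : Γ → V),
      (∀ g, Isometry (π g)) ∧
      (∀ g, Function.Bijective (π g)) ∧
      (∀ g, ∀ u v : V, π g (u + v) = π g u + π g v) ∧
      (∀ g, ∀ (c : ℝ) (v : V), π g (c • v) = c • π g v) ∧
      (∀ g h, ∀ v : V, π (g * h) v = π g (π h v)) ∧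
      (∀ g h, b (g * h) = π g (b h) + b g) ∧
      (∀ g : Γ, ∃ b' : boundedSeqs B,
        (∀ r : ℕ, b'.1 r = (A r).b g) ∧ b g = q b') ∧
      (∀ g : Γ, ρ₁ (dist (1 : Γ) g) ≤ ‖b g‖) ∧
      Tendsto (fun g : Γ => ‖b g‖) cofinite atTop :=
  stmt16_general S hS B A ρ₁ ρ₂ htend₁ hbounds hzero 𝒰 h𝒰 V q hq
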